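/- arXiv:1401.1266 — 2 statements merged into one kernel-verified Lean document; each statement's English description precedes it below -/
import Mathlib

section
/- Let A be a c.e. subset of ℕ. If D(A) is generated by a family (G_i)_{i∈ℕ} of pairwise disjoint c.e. sets, then D(A) is generated by a family (G'_i)_{i∈ℕ} of pairwise disjoint c.e. sets such that either (a) every G'_i is computable, or (b) every G'_i is noncomputable, or (c) exactly one G'_i is noncomputable and all the others are computable. -/
/-!
Each new member is the union of a finite fiber of a reindexing `σ : ℕ → ℕ` of the old ones.
Such a coarsening stays pairwise disjoint and still generates 𝒟(A), since every old member lies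
in a new one. If only finitely many `G i` are noncomputable, they are merged into the fiber over
`0` and every computable `G i` gets a fiber of its own. Otherwise the `k`-th noncomputable
member is joined with `G k` when `G k` is computable; the union is noncomputable, because
removing the computable `G k` gives back the noncomputable member.
-/

open Set Function

/-- A set of naturals is computably enumerable (c.e.) -/
def CESet (A : Set ℕ) : Prop := REPred (· ∈ A)

/-- A set of naturals is computable -/
def ComputableSet (A : Set ℕ) : Prop := ComputablePred (· ∈ A)

/-- X ⊆* Y : X is almost contained in Y -/
def SubsetStar (X Y : Set ℕ) : Prop := (X \ Y).Finite

/-- X =* Y : X and Y differ by a finite set -/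
def EqStar (X Y : Set ℕ) : Prop := (X \ Y).Finite ∧ (Y \ X).Finite

/-- G is a generating set for 𝒟(A): a countable family of c.e. sets, each disjoint
from A, such that every c.e. set disjoint from A is almost covered by finitely many
members of G. -/
def Generates (A : Set ℕ) (G : Set (Set ℕ)) : Prop :=
  G.Countable ∧ (∀ X ∈ G, CESet X) ∧ (∀ X ∈ G, Disjoint X A) ∧
  ∀ D : Set ℕ, CESet D → Disjoint D A →
    ∃ F : Set (Set ℕ), F ⊆ G ∧ F.Finite ∧ SubsetStar D (⋃₀ F)

/-- S is simple -/
def SimpleSet (S : Set ℕ) : Prop :=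
  CESet S ∧ Sᶜ.Infinite ∧ ∀ W : Set ℕ, CESet W → Disjoint W S → W.Finite

/-- A is 𝒟-maximal -/
def DMaximal (A : Set ℕ) : Prop :=
  CESet A ∧ ∀ W : Set ℕ, CESet W → ∃ D : Set ℕ, CESet D ∧ Disjoint D A ∧
    (SubsetStar W (A ∪ D) ∨ EqStar (W ∪ A ∪ D) Set.univ)

/-- M is r-maximal -/
def RMaximal (M : Set ℕ) : Prop :=
  CESet M ∧ Mᶜ.Infinite ∧
    ∀ R : Set ℕ, ComputableSet R → (R ∩ Mᶜ).Finite ∨ (Rᶜ ∩ Mᶜ).Finite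

/-- M is maximal -/
def MaximalSet (M : Set ℕ) : Prop :=
  CESet M ∧ Mᶜ.Infinite ∧
    ∀ W : Set ℕ, CESet W → M ⊆ W → (W \ M).Finite ∨ Wᶜ.Finite

/-- B is atomless -/
def AtomlessSet (B : Set ℕ) : Prop :=
  ∀ C : Set ℕ, CESet C → B ⊆ C → Cᶜ.Infinite →
    ∃ E : Set ℕ, CESet E ∧ SubsetStar C E ∧ (E \ C).Infinite ∧ Eᶜ.Infinite

/-- A0, A1 form a Friedberg splitting of A -/
def FriedbergSplitting (A0 A1 A : Set ℕ) : Prop :=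
  CESet A0 ∧ CESet A1 ∧ Disjoint A0 A1 ∧ A0 ∪ A1 = A ∧
    ∀ W : Set ℕ, CESet W → ¬ CESet (W \ A) → ¬ CESet (W \ A0) ∧ ¬ CESet (W \ A1)

/-- E is a major subset of D -/
def MajorIn (E D : Set ℕ) : Prop :=
  CESet E ∧ CESet D ∧ E ⊆ D ∧ (D \ E).Infinite ∧
    ∀ W : Set ℕ, CESet W → SubsetStar Dᶜ W → SubsetStar Eᶜ W

/-- H is hh-simple: the lattice of c.e. supersets of H mod finite is a boolean algebra -/
def HHSimple (H : Set ℕ) : Prop :=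
  CESet H ∧ Hᶜ.Infinite ∧
    ∀ W : Set ℕ, CESet W → ∃ V : Set ℕ, CESet V ∧
      EqStar ((W ∪ H) ∩ (V ∪ H)) H ∧ EqStar (W ∪ V ∪ H) Set.univ

/-- A is strongly r-separable -/
def StronglyRSeparable (A : Set ℕ) : Prop :=
  ∀ B : Set ℕ, CESet B → Disjoint B A →
    ∃ C : Set ℕ, ComputableSet C ∧ B ⊆ C ∧ Disjoint C A ∧ (C \ B).Infinite

/-- Structure of a Type 5 generating family: D0 together with the R_i. -/
def Type5Family (D0 : Set ℕ) (R : ℕ → Set ℕ) : Prop :=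
  CESet D0 ∧ ¬ ComputableSet D0 ∧ D0.Infinite ∧
  Function.Injective R ∧ (∀ i, D0 ≠ R i) ∧
  (∀ i, ComputableSet (R i) ∧ (R i).Infinite) ∧
  Pairwise (Function.onFun Disjoint R) ∧
  (∀ i, Disjoint D0 (R i))

/-- Structure of a Type 7 generating family: D0 together with the R_i. -/
def Type7Family (D0 : Set ℕ) (R : ℕ → Set ℕ) : Prop :=
  CESet D0 ∧ ¬ ComputableSet D0 ∧
  Function.Injective R ∧ (∀ i, D0 ≠ R i) ∧
  (∀ i, ComputableSet (R i) ∧ (R i).Infinite) ∧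
  Pairwise (Function.onFun Disjoint R) ∧
  {i : ℕ | (D0 ∩ R i).Nonempty}.Infinite

/-- Structure of a Type 8 generating family: the D_i together with the R_i. -/
def Type8Family (D R : ℕ → Set ℕ) : Prop :=
  Function.Injective D ∧ Function.Injective R ∧ (∀ i j, D i ≠ R j) ∧
  (∀ i, CESet (D i) ∧ ¬ ComputableSet (D i)) ∧
  Pairwise (Function.onFun Disjoint D) ∧
  (∀ i, ComputableSet (R i) ∧ (R i).Infinite) ∧
  Pairwise (Function.onFun Disjoint R)

/-- Structure of a Type 9 generating family: the nested D_i together with the R_i. -/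
def Type9Family (D R : ℕ → Set ℕ) : Prop :=
  Function.Injective R ∧ (∀ i j, D i ≠ R j) ∧
  (∀ i, ComputableSet (R i) ∧ (R i).Infinite) ∧
  Pairwise (Function.onFun Disjoint R) ∧
  (∀ i, CESet (D i) ∧ ¬ ComputableSet (D i) ∧ (D i).Infinite) ∧
  (∀ l, D l ⊆ D (l + 1)) ∧
  (∀ l, ¬ CESet (D (l + 1) \ D l)) ∧
  (∀ l, {j : ℕ | (R j \ D l).Infinite}.Infinite)

def IsType1 (G : Set (Set ℕ)) : Prop := G = {∅}

def IsType2 (G : Set (Set ℕ)) : Prop :=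
  ∃ R : Set ℕ, G = {R} ∧ ComputableSet R ∧ R.Infinite

def IsType3 (G : Set (Set ℕ)) : Prop :=
  ∃ W : Set ℕ, G = {W} ∧ CESet W ∧ ¬ ComputableSet W ∧ W.Infinite

def IsType4 (G : Set (Set ℕ)) : Prop :=
  ∃ R : ℕ → Set ℕ, G = Set.range R ∧ Function.Injective R ∧
    (∀ i, ComputableSet (R i) ∧ (R i).Infinite) ∧
    Pairwise (Function.onFun Disjoint R)

def IsType5 (G : Set (Set ℕ)) : Prop :=
  ∃ (D0 : Set ℕ) (R : ℕ → Set ℕ), G = insert D0 (Set.range R) ∧ Type5Family D0 R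

def IsType6 (G : Set (Set ℕ)) : Prop :=
  ∃ D : ℕ → Set ℕ, G = Set.range D ∧ Function.Injective D ∧
    (∀ i, CESet (D i) ∧ ¬ ComputableSet (D i) ∧ (D i).Infinite) ∧
    Pairwise (Function.onFun Disjoint D)

def IsType7 (G : Set (Set ℕ)) : Prop :=
  ∃ (D0 : Set ℕ) (R : ℕ → Set ℕ), G = insert D0 (Set.range R) ∧ Type7Family D0 R

def IsType8 (G : Set (Set ℕ)) : Prop :=
  ∃ D R : ℕ → Set ℕ, G = Set.range D ∪ Set.range R ∧ Type8Family D R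

def IsType9 (G : Set (Set ℕ)) : Prop :=
  ∃ D R : ℕ → Set ℕ, G = Set.range D ∪ Set.range R ∧ Type9Family D R

def IsType10 (G : Set (Set ℕ)) : Prop :=
  ∃ D : ℕ → Set ℕ, G = Set.range D ∧
    (∀ i, CESet (D i) ∧ ¬ ComputableSet (D i) ∧ (D i).Infinite) ∧
    (∀ l, D l ⊆ D (l + 1)) ∧
    (∀ l, ¬ CESet (D (l + 1) \ D l))

/-- G is a generating set of Type n (n = 1, …, 10). -/
def GenTypeN (n : ℕ) (G : Set (Set ℕ)) : Prop :=
  match n with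
  | 1 => IsType1 G
  | 2 => IsType2 G
  | 3 => IsType3 G
  | 4 => IsType4 G
  | 5 => IsType5 G
  | 6 => IsType6 G
  | 7 => IsType7 G
  | 8 => IsType8 G
  | 9 => IsType9 G
  | 10 => IsType10 G
  | _ => False

/-- The c.e. set A is of Type n: 𝒟(A) has a generating set of Type n
but no generating set of any Type m < n. -/
def SetOfType (A : Set ℕ) (n : ℕ) : Prop :=
  (∃ G : Set (Set ℕ), Generates A G ∧ GenTypeN n G) ∧
  ∀ m : ℕ, m < n → ¬ ∃ G : Set (Set ℕ), Generates A G ∧ GenTypeN m G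

/-- (F_i) is an A-special list. -/
def ASpecialList (A : Set ℕ) (F : ℕ → Set ℕ) : Prop :=
  F 0 = A ∧ (∀ i, CESet (F i) ∧ ¬ ComputableSet (F i)) ∧
  Pairwise (Function.onFun Disjoint F) ∧
  ∀ W : Set ℕ, CESet W → ∃ i : ℕ,
    SubsetStar W (⋃ l ≤ i, F l) ∨ EqStar (W ∪ ⋃ l ≤ i, F l) Set.univ

lemma REPred.or {α : Type*} [Primcodable α] {p q : α → Prop} (hp : REPred p) (hq : REPred q) :
    REPred fun a => p a ∨ q a := by
  obtain ⟨k, pk, hk⟩ := Partrec.merge' hp hq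
  refine pk.of_eq fun a => Part.ext' ?_ fun _ _ => rfl
  rw [(hk a).2]
  simp [Part.assert]

lemma ComputablePred.and {α : Type*} [Primcodable α] {p q : α → Prop} (hp : ComputablePred p)
    (hq : ComputablePred q) : ComputablePred fun a => p a ∧ q a := by
  obtain ⟨_, hp⟩ := hp
  obtain ⟨_, hq⟩ := hq
  exact Computable.computablePred <| (Primrec.and.to_comp.comp hp hq).of_eq fun a => by simp

lemma ComputablePred.or {α : Type*} [Primcodable α] {p q : α → Prop} (hp : ComputablePred p)
    (hq : ComputablePred q) : ComputablePred fun a => p a ∨ q a := by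
  obtain ⟨_, hp⟩ := hp
  obtain ⟨_, hq⟩ := hq
  exact Computable.computablePred <| (Primrec.or.to_comp.comp hp hq).of_eq fun a => by simp

lemma ComputableSet.empty : ComputableSet (∅ : Set ℕ) :=
  Computable.computablePred (p := fun _ => False) <| (Computable.const false).of_eq fun _ => by simp

lemma ComputableSet.union {X Y : Set ℕ} (hX : ComputableSet X) (hY : ComputableSet Y) :
    ComputableSet (X ∪ Y) :=
  hX.or hY

lemma ComputableSet.diff {X Y : Set ℕ} (hX : ComputableSet X) (hY : ComputableSet Y) :
    ComputableSet (X \ Y) :=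
  hX.and hY.not

lemma CESet.union {X Y : Set ℕ} (hX : CESet X) (hY : CESet Y) : CESet (X ∪ Y) :=
  hX.or hY

lemma ComputableSet.biUnion {s : Set ℕ} (hs : s.Finite) {G : ℕ → Set ℕ}
    (hG : ∀ i ∈ s, ComputableSet (G i)) : ComputableSet (⋃ i ∈ s, G i) := by
  induction s, hs using Set.Finite.induction_on with
  | empty => rw [biUnion_empty]; exact ComputableSet.empty
  | insert _ _ ih =>
    rw [Set.biUnion_insert]
    exact (hG _ (mem_insert _ _)).union (ih fun i hi => hG i (mem_insert_of_mem _ hi))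

lemma CESet.biUnion {s : Set ℕ} (hs : s.Finite) {G : ℕ → Set ℕ}
    (hG : ∀ i ∈ s, CESet (G i)) : CESet (⋃ i ∈ s, G i) := by
  induction s, hs using Set.Finite.induction_on with
  | empty => rw [biUnion_empty]; exact ComputableSet.empty.to_re
  | insert _ _ ih =>
    rw [Set.biUnion_insert]
    exact (hG _ (mem_insert _ _)).union (ih fun i hi => hG i (mem_insert_of_mem _ hi))

lemma Generates.of_forall_subset {A : Set ℕ} {G G' : Set (Set ℕ)} (hG : Generates A G)
    (hG' : G'.Countable) (hce : ∀ Y ∈ G', CESet Y) (hA : ∀ Y ∈ G', Disjoint Y A)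
    (hcov : ∀ X ∈ G, ∃ Y ∈ G', X ⊆ Y) : Generates A G' := by
  refine ⟨hG', hce, hA, fun D hD hDA => ?_⟩
  obtain ⟨F, hFG, hF, hDF⟩ := hG.2.2.2 D hD hDA
  choose! f hfG' hf using hcov
  refine ⟨f '' F, image_subset_iff.2 fun X hX => hfG' X (hFG hX), hF.image f, ?_⟩
  refine hDF.subset (sdiff_subset_sdiff_right (sUnion_subset fun X hX => ?_))
  exact (hf X (hFG hX)).trans (subset_sUnion_of_mem (mem_image_of_mem f hX))

def fiberUnion (G : ℕ → Set ℕ) (σ : ℕ → ℕ) (k : ℕ) : Set ℕ := ⋃ i ∈ σ ⁻¹' {k}, G i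

section fiberUnion

variable {G : ℕ → Set ℕ} {σ : ℕ → ℕ}

lemma subset_fiberUnion (i : ℕ) : G i ⊆ fiberUnion G σ (σ i) :=
  subset_biUnion_of_mem (u := G) rfl

lemma pairwise_disjoint_fiberUnion (hG : Pairwise (Disjoint on G)) :
    Pairwise (Disjoint on fiberUnion G σ) := by
  intro k l hkl
  simp only [onFun, fiberUnion, disjoint_iUnion₂_left, disjoint_iUnion₂_right]
  rintro i rfl j rfl
  exact hG fun hij => hkl (congrArg σ hij)

lemma Generates.fiberUnion {A : Set ℕ} (hG : Generates A (range G))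
    (hσ : ∀ k, (σ ⁻¹' {k}).Finite) : Generates A (range (fiberUnion G σ)) := by
  refine hG.of_forall_subset (countable_range _) ?_ ?_ ?_
  · rintro _ ⟨k, rfl⟩
    exact CESet.biUnion (hσ k) fun i _ => hG.2.1 _ (mem_range_self i)
  · rintro _ ⟨k, rfl⟩
    exact disjoint_iUnion₂_left.2 fun i _ => hG.2.2.1 _ (mem_range_self i)
  · rintro _ ⟨i, rfl⟩
    exact ⟨_, mem_range_self (σ i), subset_fiberUnion i⟩

lemma computableSet_fiberUnion {k : ℕ} (hσ : (σ ⁻¹' {k}).Finite)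
    (hG : ∀ i, σ i = k → ComputableSet (G i)) : ComputableSet (fiberUnion G σ k) :=
  ComputableSet.biUnion hσ hG

lemma not_computableSet_fiberUnion (hG : Pairwise (Disjoint on G)) {k j : ℕ}
    (hσ : (σ ⁻¹' {k}).Finite) (hj : σ j = k) (hGj : ¬ ComputableSet (G j))
    (hrest : ∀ i, σ i = k → i ≠ j → ComputableSet (G i)) :
    ¬ ComputableSet (fiberUnion G σ k) := by
  set R := ⋃ i ∈ σ ⁻¹' {k} \ {j}, G i
  have hR : ComputableSet R :=
    ComputableSet.biUnion hσ.sdiff fun i ⟨hi, hij⟩ => hrest i hi hij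
  have hGj_eq : fiberUnion G σ k \ R = G j := by
    ext x
    simp only [fiberUnion, R, mem_sdiff, mem_iUnion₂, mem_preimage, mem_singleton_iff]
    constructor
    · rintro ⟨⟨i, hi, hx⟩, hxR⟩
      by_contra hxj
      exact hxR ⟨i, ⟨hi, fun h => hxj (h ▸ hx)⟩, hx⟩
    · intro hx
      refine ⟨⟨j, hj, hx⟩, ?_⟩
      rintro ⟨i, ⟨-, hij⟩, hxi⟩
      exact disjoint_left.1 (hG hij) hxi hx
  exact fun h => hGj (hGj_eq ▸ h.diff hR)

end fiberUnion

lemma Nat.subsingleton_setOf_count_eq (p : ℕ → Prop) [DecidablePred p] (k : ℕ) :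
    {i | p i ∧ Nat.count p i = k}.Subsingleton :=
  fun _ hi _ hj => Nat.count_injective hi.1 hj.1 (hi.2.trans hj.2.symm)

lemma exists_map_fiber_finite_of_finite {p : ℕ → Prop} (hp : {i | ¬ p i}.Finite) :
    ∃ σ : ℕ → ℕ, (∀ k, (σ ⁻¹' {k}).Finite) ∧ ∀ i, σ i ≠ 0 → p i := by
  classical
  set σ : ℕ → ℕ := fun i => if p i then Nat.count p i + 1 else 0
  have hfiber : ∀ k, σ ⁻¹' {k} ⊆ {i | ¬ p i} ∪ {i | p i ∧ Nat.count p i = k - 1} := by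
    intro k i hi
    simp only [σ, mem_preimage, mem_singleton_iff] at hi
    split_ifs at hi with h
    · exact .inr ⟨h, by omega⟩
    · exact .inl h
  refine ⟨σ, fun k => ?_, fun i hi => ?_⟩
  · exact (hp.union (Nat.subsingleton_setOf_count_eq p _).finite).subset (hfiber k)
  · by_contra h
    simp [σ, h] at hi

lemma exists_map_fiber_finite_of_infinite {p : ℕ → Prop} (hp : {i | ¬ p i}.Infinite) :
    ∃ σ : ℕ → ℕ, (∀ k, (σ ⁻¹' {k}).Finite) ∧
      ∀ k, ∃ j, σ j = k ∧ ¬ p j ∧ ∀ i, σ i = k → i ≠ j → p i := by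
  classical
  set σ : ℕ → ℕ := fun i => if p i then i else Nat.count (¬ p ·) i
  have hfiber : ∀ k, σ ⁻¹' {k} ⊆ {k} ∪ {i | ¬ p i ∧ Nat.count (¬ p ·) i = k} := by
    intro k i hi
    simp only [σ, mem_preimage, mem_singleton_iff] at hi
    split_ifs at hi with h
    · exact .inl hi
    · exact .inr ⟨h, hi⟩
  refine ⟨σ, fun k => ?_, fun k => ?_⟩
  · exact ((finite_singleton k).union
      (Nat.subsingleton_setOf_count_eq (¬ p ·) k).finite).subset (hfiber k)
  · have hj : ¬ p (Nat.nth (¬ p ·) k) := Nat.nth_mem_of_infinite hp k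
    have hσj : σ (Nat.nth (¬ p ·) k) = k := by simp [σ, hj, Nat.count_nth_of_infinite hp]
    refine ⟨_, hσj, hj, fun i hi hik => ?_⟩
    by_contra h
    exact hik (Nat.subsingleton_setOf_count_eq (¬ p ·) k ⟨h, by simpa [σ, h] using hi⟩
      ⟨hj, by simpa [σ, hj] using hσj⟩)

theorem stmt_2_general (A : Set ℕ) (G : ℕ → Set ℕ)
    (hdisj : Pairwise (Function.onFun Disjoint G))
    (hgen : Generates A (Set.range G)) :
    ∃ G' : ℕ → Set ℕ, (∀ i, CESet (G' i)) ∧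
      Pairwise (Function.onFun Disjoint G') ∧ Generates A (Set.range G') ∧
      ((∀ i, ComputableSet (G' i)) ∨ (∀ i, ¬ ComputableSet (G' i)) ∨
        (∃ i, ¬ ComputableSet (G' i) ∧ ∀ j, j ≠ i → ComputableSet (G' j))) := by
  suffices h : ∃ σ : ℕ → ℕ, (∀ k, (σ ⁻¹' {k}).Finite) ∧
      ((∀ i, ComputableSet (fiberUnion G σ i)) ∨ (∀ i, ¬ ComputableSet (fiberUnion G σ i)) ∨
        (∃ i, ¬ ComputableSet (fiberUnion G σ i) ∧
          ∀ j, j ≠ i → ComputableSet (fiberUnion G σ j))) by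
    obtain ⟨σ, hσ, htype⟩ := h
    have hgen' := hgen.fiberUnion hσ
    exact ⟨_, fun k => hgen'.2.1 _ (mem_range_self k), pairwise_disjoint_fiberUnion hdisj,
      hgen', htype⟩
  by_cases hfin : {i | ¬ ComputableSet (G i)}.Finite
  · obtain ⟨σ, hσ, hσ0⟩ := exists_map_fiber_finite_of_finite hfin
    have hcomp : ∀ k, k ≠ 0 → ComputableSet (fiberUnion G σ k) := fun k hk =>
      computableSet_fiberUnion (hσ k) fun i hi => hσ0 i (hi ▸ hk)
    refine ⟨σ, hσ, ?_⟩
    by_cases h0 : ComputableSet (fiberUnion G σ 0)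
    · exact .inl fun k => if hk : k = 0 then hk ▸ h0 else hcomp k hk
    · exact .inr (.inr ⟨0, h0, hcomp⟩)
  · obtain ⟨σ, hσ, hσk⟩ := exists_map_fiber_finite_of_infinite hfin
    refine ⟨σ, hσ, .inr (.inl fun k => ?_)⟩
    obtain ⟨j, hj, hGj, hrest⟩ := hσk k
    exact not_computableSet_fiberUnion hdisj (hσ k) hj hGj hrest

theorem stmt_2 (A : Set ℕ) (hA : CESet A) (G : ℕ → Set ℕ)
    (hce : ∀ i, CESet (G i)) (hdisj : Pairwise (Function.onFun Disjoint G))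
    (hgen : Generates A (Set.range G)) :
    ∃ G' : ℕ → Set ℕ, (∀ i, CESet (G' i)) ∧
      Pairwise (Function.onFun Disjoint G') ∧ Generates A (Set.range G') ∧
      ((∀ i, ComputableSet (G' i)) ∨ (∀ i, ¬ ComputableSet (G' i)) ∨
        (∃ i, ¬ ComputableSet (G' i) ∧ ∀ j, j ≠ i → ComputableSet (G' j))) :=
  stmt_2_general A G hdisj hgen
end

section
/- Let A be a c.e. subset of ℕ and suppose there is a c.e. set A1 and a simple set S such that A, A1 form a Friedberg splitting of S. Then there is a noncomputable c.e. set W such that the singleton family {W} generates D(A). -/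
open Set Function

/-! The witness is `A1` itself. A c.e. set `D` disjoint from `A` satisfies `D \ A = D`, which is c.e.,
so by the Friedberg property `D \ S` is c.e.; being disjoint from the simple set `S` it is finite,
i.e. `D ⊆* A1`. And `A1` is not computable: otherwise `univ \ A1` would be c.e., and the Friedberg
property would make `univ \ S = Sᶜ` c.e., which a simple set forbids. -/

lemma ceSet_univ : CESet Set.univ := (Computable.const true).computablePred.to_re

lemma ComputableSet.ceSet_compl {X : Set ℕ} (h : ComputableSet X) : CESet Xᶜ := h.not.to_re

lemma SimpleSet.not_ceSet_compl {S : Set ℕ} (hS : SimpleSet S) : ¬ CESet Sᶜ :=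
  fun h => hS.2.1 (hS.2.2 _ h disjoint_compl_left)

lemma generates_singleton {A W : Set ℕ} (hW : CESet W) (hWA : Disjoint W A)
    (h : ∀ D, CESet D → Disjoint D A → SubsetStar D W) : Generates A {W} := by
  refine ⟨countable_singleton W, by simpa using hW, by simpa using hWA, fun D hD hDA => ?_⟩
  exact ⟨{W}, subset_rfl, finite_singleton W, by simpa using h D hD hDA⟩

namespace FriedbergSplitting

variable {A0 A1 A : Set ℕ}

lemma not_computableSet_right (h : FriedbergSplitting A0 A1 A) (hA : ¬ CESet Aᶜ) :
    ¬ ComputableSet A1 := fun hA1 => by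
  obtain ⟨-, -, -, -, hF⟩ := h
  have hAc : ¬ CESet (univ \ A) := by rwa [← compl_eq_univ_sdiff]
  exact (hF univ ceSet_univ hAc).2 (by simpa [← compl_eq_univ_sdiff] using hA1.ceSet_compl)

lemma ceSet_sdiff_of_disjoint_left (h : FriedbergSplitting A0 A1 A) {D : Set ℕ} (hD : CESet D)
    (hDA0 : Disjoint D A0) : CESet (D \ A) := by
  obtain ⟨-, -, -, -, hF⟩ := h
  by_contra hDA
  exact (hF D hD hDA).1 (by rwa [hDA0.sdiff_eq_left])

lemma subsetStar_right_of_disjoint_left (h : FriedbergSplitting A0 A1 A) (hA : SimpleSet A)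
    {D : Set ℕ} (hD : CESet D) (hDA0 : Disjoint D A0) : SubsetStar D A1 := by
  have hfin : (D \ A).Finite :=
    hA.2.2 _ (h.ceSet_sdiff_of_disjoint_left hD hDA0) disjoint_sdiff_left
  obtain ⟨-, -, -, rfl, -⟩ := h
  refine hfin.subset fun x ⟨hxD, hxnA1⟩ => ⟨hxD, ?_⟩
  rintro (hxA0 | hxA1)
  exacts [disjoint_left.mp hDA0 hxD hxA0, hxnA1 hxA1]

end FriedbergSplitting

theorem stmt_10_general (A A1 S : Set ℕ)
    (hS : SimpleSet S) (hsplit : FriedbergSplitting A A1 S) :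
    ∃ W : Set ℕ, CESet W ∧ ¬ ComputableSet W ∧ Generates A {W} := by
  have ⟨_, hA1, hAA1, _, _⟩ := hsplit
  refine ⟨A1, hA1, hsplit.not_computableSet_right hS.not_ceSet_compl, ?_⟩
  exact generates_singleton hA1 hAA1.symm
    fun _ hD hDA => hsplit.subsetStar_right_of_disjoint_left hS hD hDA

theorem stmt_10 (A A1 S : Set ℕ) (hA : CESet A) (hA1 : CESet A1)
    (hS : SimpleSet S) (hsplit : FriedbergSplitting A A1 S) :
    ∃ W : Set ℕ, CESet W ∧ ¬ ComputableSet W ∧ Generates A {W} :=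
  stmt_10_general A A1 S hS hsplit
end
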